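/- arXiv:math/0611930 — 3 statements merged into one kernel-verified Lean document; each statement's English description precedes it below -/
import Mathlib

section
/- Let C be a category with pullbacks and let S1, S2, S3, S4 be four composable spans in C (S1 from X0 to X1, S2 from X1 to X2, S3 from X2 to X3, S4 from X3 to X4). Form the iterated composite spans (((S1 ∘ S2) ∘ S3) ∘ S4) and (S1 ∘ (S2 ∘ (S3 ∘ S4))) using the pullback composition, and for each of these iterated pullbacks let π_i denote the canonical morphism from the composite middle object to S_i obtained by composing pullback projections (i = 1, 2, 3, 4). Then any two morphisms from the middle object of (((S1 ∘ S2) ∘ S3) ∘ S4) to the middle object of (S1 ∘ (S2 ∘ (S3 ∘ S4))) which commute with all four canonical morphisms π_1, π_2, π_3, π_4 are equal. In particular, the two composites of associator morphisms along the two sides of the pentagon coincide, i.e. the associators for span composition satisfy the pentagon identity. -/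
open CategoryTheory CategoryTheory.Limits

/-- Pentagon identity for span composition: any two morphisms between the two
extreme parenthesizations of a quadruple composite of spans which commute with
the four canonical projections are equal; in particular the two composites of
associators along the pentagon coincide. -/
theorem span_pentagon_uniqueness
    {C : Type*} [Category C] [HasPullbacks C]
    {X0 X1 X2 X3 X4 S1 S2 S3 S4 : C}
    (f1 : S1 ⟶ X0) (g1 : S1 ⟶ X1) (f2 : S2 ⟶ X1) (g2 : S2 ⟶ X2)
    (f3 : S3 ⟶ X2) (g3 : S3 ⟶ X3) (f4 : S4 ⟶ X3) (g4 : S4 ⟶ X4) :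
    ∀ h k : pullback (pullback.snd (pullback.snd g1 f2 ≫ g2) f3 ≫ g3) f4 ⟶
            pullback g1 (pullback.fst g2 (pullback.fst g3 f4 ≫ f3) ≫ f2),
      -- h commutes with the four canonical projections
      (h ≫ pullback.fst g1 (pullback.fst g2 (pullback.fst g3 f4 ≫ f3) ≫ f2)
        = pullback.fst (pullback.snd (pullback.snd g1 f2 ≫ g2) f3 ≫ g3) f4
            ≫ pullback.fst (pullback.snd g1 f2 ≫ g2) f3 ≫ pullback.fst g1 f2) →
      (h ≫ pullback.snd g1 (pullback.fst g2 (pullback.fst g3 f4 ≫ f3) ≫ f2)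
            ≫ pullback.fst g2 (pullback.fst g3 f4 ≫ f3)
        = pullback.fst (pullback.snd (pullback.snd g1 f2 ≫ g2) f3 ≫ g3) f4
            ≫ pullback.fst (pullback.snd g1 f2 ≫ g2) f3 ≫ pullback.snd g1 f2) →
      (h ≫ pullback.snd g1 (pullback.fst g2 (pullback.fst g3 f4 ≫ f3) ≫ f2)
            ≫ pullback.snd g2 (pullback.fst g3 f4 ≫ f3) ≫ pullback.fst g3 f4
        = pullback.fst (pullback.snd (pullback.snd g1 f2 ≫ g2) f3 ≫ g3) f4
            ≫ pullback.snd (pullback.snd g1 f2 ≫ g2) f3) →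
      (h ≫ pullback.snd g1 (pullback.fst g2 (pullback.fst g3 f4 ≫ f3) ≫ f2)
            ≫ pullback.snd g2 (pullback.fst g3 f4 ≫ f3) ≫ pullback.snd g3 f4
        = pullback.snd (pullback.snd (pullback.snd g1 f2 ≫ g2) f3 ≫ g3) f4) →
      -- k commutes with the four canonical projections
      (k ≫ pullback.fst g1 (pullback.fst g2 (pullback.fst g3 f4 ≫ f3) ≫ f2)
        = pullback.fst (pullback.snd (pullback.snd g1 f2 ≫ g2) f3 ≫ g3) f4
            ≫ pullback.fst (pullback.snd g1 f2 ≫ g2) f3 ≫ pullback.fst g1 f2) →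
      (k ≫ pullback.snd g1 (pullback.fst g2 (pullback.fst g3 f4 ≫ f3) ≫ f2)
            ≫ pullback.fst g2 (pullback.fst g3 f4 ≫ f3)
        = pullback.fst (pullback.snd (pullback.snd g1 f2 ≫ g2) f3 ≫ g3) f4
            ≫ pullback.fst (pullback.snd g1 f2 ≫ g2) f3 ≫ pullback.snd g1 f2) →
      (k ≫ pullback.snd g1 (pullback.fst g2 (pullback.fst g3 f4 ≫ f3) ≫ f2)
            ≫ pullback.snd g2 (pullback.fst g3 f4 ≫ f3) ≫ pullback.fst g3 f4
        = pullback.fst (pullback.snd (pullback.snd g1 f2 ≫ g2) f3 ≫ g3) f4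
            ≫ pullback.snd (pullback.snd g1 f2 ≫ g2) f3) →
      (k ≫ pullback.snd g1 (pullback.fst g2 (pullback.fst g3 f4 ≫ f3) ≫ f2)
            ≫ pullback.snd g2 (pullback.fst g3 f4 ≫ f3) ≫ pullback.snd g3 f4
        = pullback.snd (pullback.snd (pullback.snd g1 f2 ≫ g2) f3 ≫ g3) f4) →
      h = k := by
  intro h k h1 h2 h3 h4 k1 k2 k3 k4
  apply pullback.hom_ext
  · rw [h1, k1]
  · apply pullback.hom_ext
    · simp only [Category.assoc]; rw [h2, k2]
    · apply pullback.hom_ext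
      · simp only [Category.assoc]; rw [h3, k3]
      · simp only [Category.assoc]; rw [h4, k4]
end

section
/- Let C be a category with pushouts and let S1, S2, S3, S4 be four composable cospans in C (S1 from X0 to X1, S2 from X1 to X2, S3 from X2 to X3, S4 from X3 to X4). Form the iterated composite cospans (((S1 ∘ S2) ∘ S3) ∘ S4) and (S1 ∘ (S2 ∘ (S3 ∘ S4))) using the pushout composition, and for each of these iterated pushouts let ι_i denote the canonical morphism from S_i into the composite middle object obtained by composing pushout injections (i = 1, 2, 3, 4). Then any two morphisms from the middle object of (((S1 ∘ S2) ∘ S3) ∘ S4) to the middle object of (S1 ∘ (S2 ∘ (S3 ∘ S4))) which commute with all four canonical morphisms ι_1, ι_2, ι_3, ι_4 are equal. In particular, the associators for cospan composition satisfy the pentagon identity. -/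
open CategoryTheory CategoryTheory.Limits

/-- Pentagon identity for cospan composition: any two morphisms between the two
extreme parenthesizations of a quadruple composite of cospans which commute
with the four canonical injections are equal; in particular the associators
satisfy the pentagon identity. -/
theorem cospan_pentagon_uniqueness
    {C : Type*} [Category C] [HasPushouts C]
    {X0 X1 X2 X3 X4 S1 S2 S3 S4 : C}
    (f1 : X0 ⟶ S1) (g1 : X1 ⟶ S1) (f2 : X1 ⟶ S2) (g2 : X2 ⟶ S2)
    (f3 : X2 ⟶ S3) (g3 : X3 ⟶ S3) (f4 : X3 ⟶ S4) (g4 : X4 ⟶ S4) :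
    ∀ h k : pushout (g3 ≫ pushout.inr (g2 ≫ pushout.inr g1 f2) f3) f4 ⟶
            pushout g1 (f2 ≫ pushout.inl g2 (f3 ≫ pushout.inl g3 f4)),
      -- h commutes with the four canonical injections
      (pushout.inl g1 f2 ≫ pushout.inl (g2 ≫ pushout.inr g1 f2) f3
          ≫ pushout.inl (g3 ≫ pushout.inr (g2 ≫ pushout.inr g1 f2) f3) f4 ≫ h
        = pushout.inl g1 (f2 ≫ pushout.inl g2 (f3 ≫ pushout.inl g3 f4))) →
      (pushout.inr g1 f2 ≫ pushout.inl (g2 ≫ pushout.inr g1 f2) f3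
          ≫ pushout.inl (g3 ≫ pushout.inr (g2 ≫ pushout.inr g1 f2) f3) f4 ≫ h
        = pushout.inl g2 (f3 ≫ pushout.inl g3 f4)
            ≫ pushout.inr g1 (f2 ≫ pushout.inl g2 (f3 ≫ pushout.inl g3 f4))) →
      (pushout.inr (g2 ≫ pushout.inr g1 f2) f3
          ≫ pushout.inl (g3 ≫ pushout.inr (g2 ≫ pushout.inr g1 f2) f3) f4 ≫ h
        = pushout.inl g3 f4 ≫ pushout.inr g2 (f3 ≫ pushout.inl g3 f4)
            ≫ pushout.inr g1 (f2 ≫ pushout.inl g2 (f3 ≫ pushout.inl g3 f4))) →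
      (pushout.inr (g3 ≫ pushout.inr (g2 ≫ pushout.inr g1 f2) f3) f4 ≫ h
        = pushout.inr g3 f4 ≫ pushout.inr g2 (f3 ≫ pushout.inl g3 f4)
            ≫ pushout.inr g1 (f2 ≫ pushout.inl g2 (f3 ≫ pushout.inl g3 f4))) →
      -- k commutes with the four canonical injections
      (pushout.inl g1 f2 ≫ pushout.inl (g2 ≫ pushout.inr g1 f2) f3
          ≫ pushout.inl (g3 ≫ pushout.inr (g2 ≫ pushout.inr g1 f2) f3) f4 ≫ k
        = pushout.inl g1 (f2 ≫ pushout.inl g2 (f3 ≫ pushout.inl g3 f4))) →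
      (pushout.inr g1 f2 ≫ pushout.inl (g2 ≫ pushout.inr g1 f2) f3
          ≫ pushout.inl (g3 ≫ pushout.inr (g2 ≫ pushout.inr g1 f2) f3) f4 ≫ k
        = pushout.inl g2 (f3 ≫ pushout.inl g3 f4)
            ≫ pushout.inr g1 (f2 ≫ pushout.inl g2 (f3 ≫ pushout.inl g3 f4))) →
      (pushout.inr (g2 ≫ pushout.inr g1 f2) f3
          ≫ pushout.inl (g3 ≫ pushout.inr (g2 ≫ pushout.inr g1 f2) f3) f4 ≫ k
        = pushout.inl g3 f4 ≫ pushout.inr g2 (f3 ≫ pushout.inl g3 f4)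
            ≫ pushout.inr g1 (f2 ≫ pushout.inl g2 (f3 ≫ pushout.inl g3 f4))) →
      (pushout.inr (g3 ≫ pushout.inr (g2 ≫ pushout.inr g1 f2) f3) f4 ≫ k
        = pushout.inr g3 f4 ≫ pushout.inr g2 (f3 ≫ pushout.inl g3 f4)
            ≫ pushout.inr g1 (f2 ≫ pushout.inl g2 (f3 ≫ pushout.inl g3 f4))) →
      h = k := by
  intro h k h1 h2 h3 h4 k1 k2 k3 k4
  apply pushout.hom_ext
  · apply pushout.hom_ext
    · apply pushout.hom_ext
      · simp only [Category.assoc, h1, k1]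
      · simp only [Category.assoc, h2, k2]
    · simp only [Category.assoc, h3, k3]
  · simp only [Category.assoc, h4, k4]
end

section
/- Let C be a category with pushouts. Suppose given objects P, S1, S2, T1, T2, M11, M12, M21, M22 of C and morphisms a1 : P → S1, a2 : P → S2, b1 : P → T1, b2 : P → T2, together with s1t : S1 → M11, s1b : S1 → M21, s2t : S2 → M12, s2b : S2 → M22, t1l : T1 → M11, t1r : T1 → M12, t2l : T2 → M21, t2r : T2 → M22, satisfying s1t ∘ a1 = t1l ∘ b1, s2t ∘ a2 = t1r ∘ b1, s1b ∘ a1 = t2l ∘ b2, and s2b ∘ a2 = t2r ∘ b2. Form the pushouts H1 = M11 ⊔_{T1} M12 (of t1l and t1r), H2 = M21 ⊔_{T2} M22 (of t2l and t2r), and S = S1 ⊔_P S2 (of a1 and a2), with the induced morphisms σ1 : S → H1 (determined by incl_{M11} ∘ s1t and incl_{M12} ∘ s2t) and σ2 : S → H2 (determined by incl_{M21} ∘ s1b and incl_{M22} ∘ s2b). Dually form V1 = M11 ⊔_{S1} M21, V2 = M12 ⊔_{S2} M22, and T = T1 ⊔_P T2, with the induced morphisms τ1 : T → V1 and τ2 :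 T → V2. Then there is an isomorphism between the pushout H1 ⊔_S H2 (of σ1 and σ2) and the pushout V1 ⊔_T V2 (of τ1 and τ2) which commutes with the four canonical morphisms from M11, M12, M21, and M22 into each side. (Interchange law for horizontal and vertical composition of double cospan squares.) -/
/-!
Both `pushout σ1 σ2` and `pushout τ1 τ2` corepresent the same thing: quadruples of maps out
of `M11, M12, M21, M22` that agree on `T1, T2` (along the `t`'s) and on `S1, S2` (along the
`s`'s). Maps out of either iterated pushout are determined by their restrictions to the four
middles, and every such compatible quadruple descends, so descending each side's four
injections to the other side gives mutually inverse maps. Transposing the square exchanges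
the two sides, so each fact needs to be proved only once.
-/

open CategoryTheory CategoryTheory.Limits

namespace IteratedPushout

variable {C : Type*} [Category C] [HasPushouts C]
  {P S1 S2 T1 T2 M11 M12 M21 M22 : C} {a1 : P ⟶ S1} {a2 : P ⟶ S2}
  {s1t : S1 ⟶ M11} {s1b : S1 ⟶ M21} {s2t : S2 ⟶ M12} {s2b : S2 ⟶ M22}
  {t1l : T1 ⟶ M11} {t1r : T1 ⟶ M12} {t2l : T2 ⟶ M21} {t2r : T2 ⟶ M22}
  {σ1 : pushout a1 a2 ⟶ pushout t1l t1r} {σ2 : pushout a1 a2 ⟶ pushout t2l t2r}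

theorem hom_ext {X : C} {f g : pushout σ1 σ2 ⟶ X}
    (h11 : pushout.inl t1l t1r ≫ pushout.inl σ1 σ2 ≫ f =
      pushout.inl t1l t1r ≫ pushout.inl σ1 σ2 ≫ g)
    (h12 : pushout.inr t1l t1r ≫ pushout.inl σ1 σ2 ≫ f =
      pushout.inr t1l t1r ≫ pushout.inl σ1 σ2 ≫ g)
    (h21 : pushout.inl t2l t2r ≫ pushout.inr σ1 σ2 ≫ f =
      pushout.inl t2l t2r ≫ pushout.inr σ1 σ2 ≫ g)
    (h22 : pushout.inr t2l t2r ≫ pushout.inr σ1 σ2 ≫ f =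
      pushout.inr t2l t2r ≫ pushout.inr σ1 σ2 ≫ g) :
    f = g := by
  ext <;> simpa only [Category.assoc]

theorem condition_left (hσ1l : pushout.inl a1 a2 ≫ σ1 = s1t ≫ pushout.inl t1l t1r)
    (hσ2l : pushout.inl a1 a2 ≫ σ2 = s1b ≫ pushout.inl t2l t2r) :
    s1t ≫ pushout.inl t1l t1r ≫ pushout.inl σ1 σ2 =
      s1b ≫ pushout.inl t2l t2r ≫ pushout.inr σ1 σ2 := by
  rw [← reassoc_of% hσ1l, ← reassoc_of% hσ2l, pushout.condition]

theorem condition_right (hσ1r : pushout.inr a1 a2 ≫ σ1 = s2t ≫ pushout.inr t1l t1r)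
    (hσ2r : pushout.inr a1 a2 ≫ σ2 = s2b ≫ pushout.inr t2l t2r) :
    s2t ≫ pushout.inr t1l t1r ≫ pushout.inl σ1 σ2 =
      s2b ≫ pushout.inr t2l t2r ≫ pushout.inr σ1 σ2 := by
  rw [← reassoc_of% hσ1r, ← reassoc_of% hσ2r, pushout.condition]

noncomputable def desc
    (hσ1l : pushout.inl a1 a2 ≫ σ1 = s1t ≫ pushout.inl t1l t1r)
    (hσ1r : pushout.inr a1 a2 ≫ σ1 = s2t ≫ pushout.inr t1l t1r)
    (hσ2l : pushout.inl a1 a2 ≫ σ2 = s1b ≫ pushout.inl t2l t2r)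
    (hσ2r : pushout.inr a1 a2 ≫ σ2 = s2b ≫ pushout.inr t2l t2r)
    {X : C} (m11 : M11 ⟶ X) (m12 : M12 ⟶ X) (m21 : M21 ⟶ X) (m22 : M22 ⟶ X)
    (w1 : t1l ≫ m11 = t1r ≫ m12) (w2 : t2l ≫ m21 = t2r ≫ m22)
    (v1 : s1t ≫ m11 = s1b ≫ m21) (v2 : s2t ≫ m12 = s2b ≫ m22) :
    pushout σ1 σ2 ⟶ X :=
  pushout.desc (pushout.desc m11 m12 w1) (pushout.desc m21 m22 w2) <| by
    ext
    · simp only [reassoc_of% hσ1l, reassoc_of% hσ2l, pushout.inl_desc, v1]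
    · simp only [reassoc_of% hσ1r, reassoc_of% hσ2r, pushout.inr_desc, v2]

section desc

variable {hσ1l : pushout.inl a1 a2 ≫ σ1 = s1t ≫ pushout.inl t1l t1r}
  {hσ1r : pushout.inr a1 a2 ≫ σ1 = s2t ≫ pushout.inr t1l t1r}
  {hσ2l : pushout.inl a1 a2 ≫ σ2 = s1b ≫ pushout.inl t2l t2r}
  {hσ2r : pushout.inr a1 a2 ≫ σ2 = s2b ≫ pushout.inr t2l t2r}
  {X : C} {m11 : M11 ⟶ X} {m12 : M12 ⟶ X} {m21 : M21 ⟶ X} {m22 : M22 ⟶ X}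
  {w1 : t1l ≫ m11 = t1r ≫ m12} {w2 : t2l ≫ m21 = t2r ≫ m22}
  {v1 : s1t ≫ m11 = s1b ≫ m21} {v2 : s2t ≫ m12 = s2b ≫ m22}

@[simp]
theorem inl_inl_desc :
    pushout.inl t1l t1r ≫ pushout.inl σ1 σ2 ≫
      desc hσ1l hσ1r hσ2l hσ2r m11 m12 m21 m22 w1 w2 v1 v2
      = m11 := by
  simp only [desc, pushout.inl_desc]

@[simp]
theorem inr_inl_desc :
    pushout.inr t1l t1r ≫ pushout.inl σ1 σ2 ≫
      desc hσ1l hσ1r hσ2l hσ2r m11 m12 m21 m22 w1 w2 v1 v2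
      = m12 := by
  simp only [desc, pushout.inl_desc, pushout.inr_desc]

@[simp]
theorem inl_inr_desc :
    pushout.inl t2l t2r ≫ pushout.inr σ1 σ2 ≫
      desc hσ1l hσ1r hσ2l hσ2r m11 m12 m21 m22 w1 w2 v1 v2
      = m21 := by
  simp only [desc, pushout.inr_desc, pushout.inl_desc]

@[simp]
theorem inr_inr_desc :
    pushout.inr t2l t2r ≫ pushout.inr σ1 σ2 ≫
      desc hσ1l hσ1r hσ2l hσ2r m11 m12 m21 m22 w1 w2 v1 v2
      = m22 := by
  simp only [desc, pushout.inr_desc]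

end desc

end IteratedPushout

theorem double_cospan_interchange_general
    {C : Type*} [Category C] [HasPushouts C]
    {P S1 S2 T1 T2 M11 M12 M21 M22 : C}
    (a1 : P ⟶ S1) (a2 : P ⟶ S2) (b1 : P ⟶ T1) (b2 : P ⟶ T2)
    (s1t : S1 ⟶ M11) (s1b : S1 ⟶ M21) (s2t : S2 ⟶ M12) (s2b : S2 ⟶ M22)
    (t1l : T1 ⟶ M11) (t1r : T1 ⟶ M12) (t2l : T2 ⟶ M21) (t2r : T2 ⟶ M22)
    -- the induced map σ1 : S = S1 ⊔_P S2 ⟶ H1 = M11 ⊔_{T1} M12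
    (σ1 : pushout a1 a2 ⟶ pushout t1l t1r)
    (hσ1l : pushout.inl a1 a2 ≫ σ1 = s1t ≫ pushout.inl t1l t1r)
    (hσ1r : pushout.inr a1 a2 ≫ σ1 = s2t ≫ pushout.inr t1l t1r)
    -- the induced map σ2 : S ⟶ H2 = M21 ⊔_{T2} M22
    (σ2 : pushout a1 a2 ⟶ pushout t2l t2r)
    (hσ2l : pushout.inl a1 a2 ≫ σ2 = s1b ≫ pushout.inl t2l t2r)
    (hσ2r : pushout.inr a1 a2 ≫ σ2 = s2b ≫ pushout.inr t2l t2r)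
    -- the induced map τ1 : T = T1 ⊔_P T2 ⟶ V1 = M11 ⊔_{S1} M21
    (τ1 : pushout b1 b2 ⟶ pushout s1t s1b)
    (hτ1l : pushout.inl b1 b2 ≫ τ1 = t1l ≫ pushout.inl s1t s1b)
    (hτ1r : pushout.inr b1 b2 ≫ τ1 = t2l ≫ pushout.inr s1t s1b)
    -- the induced map τ2 : T ⟶ V2 = M12 ⊔_{S2} M22
    (τ2 : pushout b1 b2 ⟶ pushout s2t s2b)
    (hτ2l : pushout.inl b1 b2 ≫ τ2 = t1r ≫ pushout.inl s2t s2b)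
    (hτ2r : pushout.inr b1 b2 ≫ τ2 = t2r ≫ pushout.inr s2t s2b) :
    ∃ e : pushout σ1 σ2 ≅ pushout τ1 τ2,
      (pushout.inl t1l t1r ≫ pushout.inl σ1 σ2) ≫ e.hom
        = pushout.inl s1t s1b ≫ pushout.inl τ1 τ2 ∧
      (pushout.inr t1l t1r ≫ pushout.inl σ1 σ2) ≫ e.hom
        = pushout.inl s2t s2b ≫ pushout.inr τ1 τ2 ∧
      (pushout.inl t2l t2r ≫ pushout.inr σ1 σ2) ≫ e.hom
        = pushout.inr s1t s1b ≫ pushout.inl τ1 τ2 ∧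
      (pushout.inr t2l t2r ≫ pushout.inr σ1 σ2) ≫ e.hom
        = pushout.inr s2t s2b ≫ pushout.inr τ1 τ2 := by
  let hom : pushout σ1 σ2 ⟶ pushout τ1 τ2 :=
    IteratedPushout.desc hσ1l hσ1r hσ2l hσ2r _ _ _ _
      (IteratedPushout.condition_left hτ1l hτ2l) (IteratedPushout.condition_right hτ1r hτ2r)
      (pushout.condition_assoc _) (pushout.condition_assoc _)
  let inv : pushout τ1 τ2 ⟶ pushout σ1 σ2 :=
    IteratedPushout.desc hτ1l hτ1r hτ2l hτ2r _ _ _ _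
      (IteratedPushout.condition_left hσ1l hσ2l) (IteratedPushout.condition_right hσ1r hσ2r)
      (pushout.condition_assoc _) (pushout.condition_assoc _)
  refine ⟨⟨hom, inv, IteratedPushout.hom_ext ?_ ?_ ?_ ?_,
    IteratedPushout.hom_ext ?_ ?_ ?_ ?_⟩, ?_, ?_, ?_, ?_⟩
  all_goals simp [hom, inv, reassoc_of% IteratedPushout.inl_inl_desc,
    reassoc_of% IteratedPushout.inr_inl_desc, reassoc_of% IteratedPushout.inl_inr_desc,
    reassoc_of% IteratedPushout.inr_inr_desc]

/-- Interchange law for horizontal and vertical composition of double cospan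
squares: composing the two rows horizontally and then pushing out vertically
gives an object canonically isomorphic to the one obtained by composing the
two columns vertically and then pushing out horizontally, compatibly with the
four canonical maps from the square middles `M11, M12, M21, M22`. -/
theorem double_cospan_interchange
    {C : Type*} [Category C] [HasPushouts C]
    {P S1 S2 T1 T2 M11 M12 M21 M22 : C}
    (a1 : P ⟶ S1) (a2 : P ⟶ S2) (b1 : P ⟶ T1) (b2 : P ⟶ T2)
    (s1t : S1 ⟶ M11) (s1b : S1 ⟶ M21) (s2t : S2 ⟶ M12) (s2b : S2 ⟶ M22)
    (t1l : T1 ⟶ M11) (t1r : T1 ⟶ M12) (t2l : T2 ⟶ M21) (t2r : T2 ⟶ M22)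
    (h11 : a1 ≫ s1t = b1 ≫ t1l) (h12 : a2 ≫ s2t = b1 ≫ t1r)
    (h21 : a1 ≫ s1b = b2 ≫ t2l) (h22 : a2 ≫ s2b = b2 ≫ t2r)
    -- the induced map σ1 : S = S1 ⊔_P S2 ⟶ H1 = M11 ⊔_{T1} M12
    (σ1 : pushout a1 a2 ⟶ pushout t1l t1r)
    (hσ1l : pushout.inl a1 a2 ≫ σ1 = s1t ≫ pushout.inl t1l t1r)
    (hσ1r : pushout.inr a1 a2 ≫ σ1 = s2t ≫ pushout.inr t1l t1r)
    -- the induced map σ2 : S ⟶ H2 = M21 ⊔_{T2} M22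
    (σ2 : pushout a1 a2 ⟶ pushout t2l t2r)
    (hσ2l : pushout.inl a1 a2 ≫ σ2 = s1b ≫ pushout.inl t2l t2r)
    (hσ2r : pushout.inr a1 a2 ≫ σ2 = s2b ≫ pushout.inr t2l t2r)
    -- the induced map τ1 : T = T1 ⊔_P T2 ⟶ V1 = M11 ⊔_{S1} M21
    (τ1 : pushout b1 b2 ⟶ pushout s1t s1b)
    (hτ1l : pushout.inl b1 b2 ≫ τ1 = t1l ≫ pushout.inl s1t s1b)
    (hτ1r : pushout.inr b1 b2 ≫ τ1 = t2l ≫ pushout.inr s1t s1b)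
    -- the induced map τ2 : T ⟶ V2 = M12 ⊔_{S2} M22
    (τ2 : pushout b1 b2 ⟶ pushout s2t s2b)
    (hτ2l : pushout.inl b1 b2 ≫ τ2 = t1r ≫ pushout.inl s2t s2b)
    (hτ2r : pushout.inr b1 b2 ≫ τ2 = t2r ≫ pushout.inr s2t s2b) :
    ∃ e : pushout σ1 σ2 ≅ pushout τ1 τ2,
      (pushout.inl t1l t1r ≫ pushout.inl σ1 σ2) ≫ e.hom
        = pushout.inl s1t s1b ≫ pushout.inl τ1 τ2 ∧
      (pushout.inr t1l t1r ≫ pushout.inl σ1 σ2) ≫ e.hom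
        = pushout.inl s2t s2b ≫ pushout.inr τ1 τ2 ∧
      (pushout.inl t2l t2r ≫ pushout.inr σ1 σ2) ≫ e.hom
        = pushout.inr s1t s1b ≫ pushout.inl τ1 τ2 ∧
      (pushout.inr t2l t2r ≫ pushout.inr σ1 σ2) ≫ e.hom
        = pushout.inr s2t s2b ≫ pushout.inr τ1 τ2 :=
  double_cospan_interchange_general a1 a2 b1 b2 s1t s1b s2t s2b t1l t1r t2l t2r σ1 hσ1l hσ1r σ2 hσ2l
    hσ2r τ1 hτ1l hτ1r τ2 hτ2l hτ2r
end
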